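/- If C₁ and C₂ are 2-copulas that are each stochastically increasing in the first component (u ↦ Cᵢ(u,v) concave for each v), then their Markov product C₁ * C₂ is also stochastically increasing in the first component. -/

import Mathlib

/-!
Fix `v`. By concavity of `C₂(·, v)`, the weight `∂₁C₂(·, v)` agrees a.e. with a nonnegative
antitone function `G`, so `(C₁ * C₂)(w, v) = ∫₀¹ ∂₂C₁(w, t) G(t) dt`. For `u = p x + q y` the
function `k = ∂₂C₁(u, ·) - p ∂₂C₁(x, ·) - q ∂₂C₁(y, ·)` has primitive
`C₁(u, s) - p C₁(x, s) - q C₁(y, s) ≥ 0` by concavity of `C₁(·, s)`. Integrating `k` against a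
nonnegative antitone weight keeps the sign: by the layer-cake formula `G(t) = ∫ 𝟙{y < G(t)} dy`
and every superlevel set of `G` is an initial segment, on which `∫ k ≥ 0`.
-/

open MeasureTheory Set Filter

def IsCopula (C : ℝ → ℝ → ℝ) : Prop :=
  (∀ u ∈ Icc (0:ℝ) 1, C u 0 = 0 ∧ C u 1 = u) ∧
  (∀ v ∈ Icc (0:ℝ) 1, C 0 v = 0 ∧ C 1 v = v) ∧
  (∀ u₁ u₂ v₁ v₂ : ℝ, u₁ ∈ Icc (0:ℝ) 1 → u₂ ∈ Icc (0:ℝ) 1 →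
    v₁ ∈ Icc (0:ℝ) 1 → v₂ ∈ Icc (0:ℝ) 1 → u₁ ≤ u₂ → v₁ ≤ v₂ →
    0 ≤ C u₂ v₂ - C u₂ v₁ - C u₁ v₂ + C u₁ v₁)

/-- Markov product of two copulas: (C₁ * C₂)(u,v) = ∫₀¹ ∂₂C₁(u,t) ∂₁C₂(t,v) dt. -/
noncomputable def MarkovProduct (C₁ C₂ : ℝ → ℝ → ℝ) (u v : ℝ) : ℝ :=
  ∫ t in (0:ℝ)..1, deriv (fun s => C₁ u s) t * deriv (fun s => C₂ s v) t

/-- Stochastically increasing in the first component: u ↦ C(u,v) is concave for each v. -/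
def StochIncr (C : ℝ → ℝ → ℝ) : Prop :=
  ∀ v ∈ Icc (0:ℝ) 1, ConcaveOn ℝ (Icc (0:ℝ) 1) (fun u => C u v)

/-- Stochastically decreasing in the first component: u ↦ C(u,v) is convex for each v. -/
def StochDecr (C : ℝ → ℝ → ℝ) : Prop :=
  ∀ v ∈ Icc (0:ℝ) 1, ConvexOn ℝ (Icc (0:ℝ) 1) (fun u => C u v)

open Topology

namespace IsCopula

variable {C : ℝ → ℝ → ℝ}

lemma swap (hC : IsCopula C) : IsCopula fun u v => C v u :=
  ⟨hC.2.1, hC.1, fun u₁ u₂ v₁ v₂ hu₁ hu₂ hv₁ hv₂ hu hv => by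
    linarith [hC.2.2 v₁ v₂ u₁ u₂ hv₁ hv₂ hu₁ hu₂ hv hu]⟩

lemma sub_mem_Icc_left (hC : IsCopula C) {u₁ u₂ v : ℝ} (hu₁ : u₁ ∈ Icc (0:ℝ) 1)
    (hu₂ : u₂ ∈ Icc (0:ℝ) 1) (hv : v ∈ Icc (0:ℝ) 1) (h : u₁ ≤ u₂) :
    C u₂ v - C u₁ v ∈ Icc 0 (u₂ - u₁) := by
  have h₀ := hC.2.2 u₁ u₂ 0 v hu₁ hu₂ (left_mem_Icc.2 zero_le_one) hv h hv.1
  have h₁ := hC.2.2 u₁ u₂ v 1 hu₁ hu₂ hv (right_mem_Icc.2 zero_le_one) h hv.2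
  rw [(hC.1 u₁ hu₁).1, (hC.1 u₂ hu₂).1] at h₀
  rw [(hC.1 u₁ hu₁).2, (hC.1 u₂ hu₂).2] at h₁
  constructor <;> linarith

lemma monotoneOn_left (hC : IsCopula C) {v : ℝ} (hv : v ∈ Icc (0:ℝ) 1) :
    MonotoneOn (fun u => C u v) (Icc 0 1) := fun _ hx _ hy h =>
  sub_nonneg.1 (hC.sub_mem_Icc_left hx hy hv h).1

lemma lipschitzOnWith_left (hC : IsCopula C) {v : ℝ} (hv : v ∈ Icc (0:ℝ) 1) :
    LipschitzOnWith 1 (fun u => C u v) (Icc 0 1) := by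
  refine LipschitzOnWith.of_le_add_mul 1 fun x hx y hy => ?_
  rw [NNReal.coe_one, one_mul, Real.dist_eq]
  rcases le_total x y with h | h
  · linarith [hC.monotoneOn_left hv hx hy h, abs_nonneg (x - y)]
  · linarith [(hC.sub_mem_Icc_left hy hx hv h).2, le_abs_self (x - y)]

lemma lipschitzOnWith_right (hC : IsCopula C) {u : ℝ} (hu : u ∈ Icc (0:ℝ) 1) :
    LipschitzOnWith 1 (C u) (Icc 0 1) :=
  hC.swap.lipschitzOnWith_left hu

end IsCopula

lemma deriv_mem_Icc_of_monotoneOn_of_lipschitzOnWith {f : ℝ → ℝ} {s : Set ℝ} {x : ℝ}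
    {K : NNReal} (hs : s ∈ 𝓝 x) (hf : MonotoneOn f s) (hK : LipschitzOnWith K f s) :
    deriv f x ∈ Icc 0 (K : ℝ) :=
  ⟨hf.derivWithin_nonneg.trans_eq (derivWithin_of_mem_nhds hs),
    (le_abs_self _).trans (norm_deriv_le_of_lipschitzOn hs hK)⟩

/-- `deriv f` is antitone only on the (co-null) set where `f` is differentiable, since `deriv` is
junk `0` elsewhere; hence the a.e. statement. -/
theorem ConcaveOn.exists_antitone_ae_eq_deriv {f : ℝ → ℝ} {a b : ℝ} {K : NNReal}
    (hconc : ConcaveOn ℝ (Icc a b) f) (hmono : MonotoneOn f (Icc a b))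
    (hK : LipschitzOnWith K f (Icc a b)) :
    ∃ G : ℝ → ℝ, Antitone G ∧ (∀ t, 0 ≤ G t) ∧ deriv f =ᵐ[volume.restrict (Ioo a b)] G := by
  set D := {t ∈ Ioo a b | DifferentiableAt ℝ f t}
  have hbound : ∀ t ∈ D, deriv f t ∈ Icc 0 (K : ℝ) := fun t ht =>
    deriv_mem_Icc_of_monotoneOn_of_lipschitzOnWith (Icc_mem_nhds ht.1.1 ht.1.2) hmono hK
  have hanti : AntitoneOn (deriv f) D := by
    intro s hs t ht hst
    rcases hst.eq_or_lt with rfl | hlt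
    · rfl
    have hs' := Ioo_subset_Icc_self hs.1
    have ht' := Ioo_subset_Icc_self ht.1
    exact (hconc.deriv_le_slope hs' ht' hlt ht.2).trans (hconc.slope_le_deriv hs' ht' hlt hs.2)
  obtain ⟨G, hG, hGD⟩ := hanti.exists_antitone_extension
    ⟨0, by rintro _ ⟨t, ht, rfl⟩; exact (hbound t ht).1⟩
    ⟨K, by rintro _ ⟨t, ht, rfl⟩; exact (hbound t ht).2⟩
  refine ⟨fun t => max (G t) 0, hG.max antitone_const, fun t => le_max_right _ _, ?_⟩
  filter_upwards [ae_restrict_of_ae hK.ae_differentiableWithinAt_of_mem_real,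
    ae_restrict_mem measurableSet_Ioo] with t hdiff ht
  have htD : t ∈ D := ⟨ht, hdiff (Ioo_subset_Icc_self ht) |>.differentiableAt
    (Icc_mem_nhds ht.1 ht.2)⟩
  rw [← hGD htD, max_eq_left (hbound t htD).1]

lemma IsLowerSet.exists_Ioo_inter_ae_eq_Ioc {S : Set ℝ} (hS : IsLowerSet S) {a b : ℝ}
    (hab : a ≤ b) : ∃ τ ∈ Icc a b, (Ioo a b ∩ S : Set ℝ) =ᵐ[volume] Ioc a τ := by
  set T := insert a (Ioo a b ∩ S)
  have hTb : ∀ t ∈ T, t ≤ b := by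
    rintro t (rfl | ht)
    exacts [hab, ht.1.2.le]
  have hT : BddAbove T := ⟨b, hTb⟩
  refine ⟨sSup T, ⟨le_csSup hT (mem_insert _ _), csSup_le (insert_nonempty _ _) hTb⟩, ?_⟩
  have hsub : Ioo a b ∩ S ⊆ Ioc a (sSup T) := fun t ht =>
    ⟨ht.1.1, le_csSup hT (mem_insert_of_mem _ ht)⟩
  have hsup : Ioo a (sSup T) ⊆ Ioo a b ∩ S := by
    rintro t ⟨hat, htT⟩
    obtain ⟨s, hs | hs, hts⟩ := exists_lt_of_lt_csSup (insert_nonempty _ _) htT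
    · exact absurd (hs ▸ hts) hat.not_gt
    · exact ⟨⟨hat, hts.trans hs.1.2⟩, hS hts.le hs.2⟩
  exact hsub.eventuallyLE.antisymm (Ioo_ae_eq_Ioc.symm.le.trans hsup.eventuallyLE)

theorem integral_mul_nonneg_of_antitone {k g : ℝ → ℝ} {a b : ℝ} (hab : a ≤ b)
    (hk : IntervalIntegrable k volume a b) (hg : Antitone g) (hg0 : ∀ t ∈ Ioo a b, 0 ≤ g t)
    (hK : ∀ s ∈ Icc a b, 0 ≤ ∫ t in a..s, k t) : 0 ≤ ∫ t in a..b, k t * g t := by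
  set μ := volume.restrict (Ioo a b)
  set ν := volume.restrict (Ioc 0 (g a))
  set F : ℝ → ℝ → ℝ := fun t y => (Iio (g t)).indicator (fun _ => k t) y
  have hF : Integrable (Function.uncurry F) (μ.prod ν) :=
    ((hk.1.mono_set Ioo_subset_Ioc_self).comp_fst ν).indicator
      (measurableSet_lt measurable_snd (hg.measurable.comp measurable_fst))
  have hinner : ∀ t ∈ Ioo a b, ∫ y, F t y ∂ν = k t * g t := by
    intro t ht
    have hlevel : Ioc 0 (g a) ∩ Iio (g t) = Ioo 0 (g t) := by
      ext y
      simp only [mem_inter_iff, mem_Ioc, mem_Iio, mem_Ioo]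
      constructor
      · exact fun h => ⟨h.1.1, h.2⟩
      · exact fun h => ⟨⟨h.1, h.2.le.trans (hg ht.1.le)⟩, h.2⟩
    rw [setIntegral_indicator measurableSet_Iio, hlevel, setIntegral_const,
      Real.volume_real_Ioo_of_le (hg0 t ht), sub_zero, smul_eq_mul, mul_comm]
  have houter : ∀ y, 0 ≤ ∫ t, F t y ∂μ := by
    intro y
    obtain ⟨τ, hτ, hae⟩ := IsLowerSet.exists_Ioo_inter_ae_eq_Ioc (S := {t | y < g t})
      (fun s t hts hs => lt_of_lt_of_le hs (hg hts)) hab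
    change 0 ≤ ∫ t in Ioo a b, {t | y < g t}.indicator k t
    rw [setIntegral_indicator (measurableSet_lt measurable_const hg.measurable),
      setIntegral_congr_set hae, ← intervalIntegral.integral_of_le hτ.1]
    exact hK τ hτ
  calc 0 ≤ ∫ y, ∫ t, F t y ∂μ ∂ν := integral_nonneg houter
    _ = ∫ t, ∫ y, F t y ∂ν ∂μ := (integral_integral_swap hF).symm
    _ = ∫ t in Ioo a b, k t * g t := setIntegral_congr_fun measurableSet_Ioo hinner
    _ = ∫ t in a..b, k t * g t := by
      rw [intervalIntegral.integral_of_le hab, setIntegral_congr_set Ioo_ae_eq_Ioc]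

lemma IntervalIntegrable.mul_antitone {f G : ℝ → ℝ} {a b : ℝ}
    (hf : IntervalIntegrable f volume a b) (hG : Antitone G) :
    IntervalIntegrable (fun t => f t * G t) volume a b := by
  rw [intervalIntegrable_iff] at hf ⊢
  refine hf.mul_bdd hG.measurable.aestronglyMeasurable (c := max |G (max a b)| |G (min a b)|) ?_
  filter_upwards [ae_restrict_mem measurableSet_uIoc] with t ht
  exact abs_le_max_abs_abs (hG ht.2) (hG ht.1.le)

lemma intervalIntegral.integral_sub_mul_sub_mul {f₁ f₂ f₃ : ℝ → ℝ} {a b : ℝ} (p q : ℝ)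
    (h₁ : IntervalIntegrable f₁ volume a b) (h₂ : IntervalIntegrable f₂ volume a b)
    (h₃ : IntervalIntegrable f₃ volume a b) :
    ∫ t in a..b, (f₁ t - p * f₂ t - q * f₃ t) =
      (∫ t in a..b, f₁ t) - p * (∫ t in a..b, f₂ t) - q * ∫ t in a..b, f₃ t := by
  rw [integral_sub (h₁.sub (h₂.const_mul p)) (h₃.const_mul q), integral_sub h₁ (h₂.const_mul p),
    integral_const_mul, integral_const_mul]

theorem concaveOn_integral_deriv_mul_of_antitone {F : ℝ → ℝ → ℝ} {G : ℝ → ℝ} {s : Set ℝ}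
    {a b : ℝ} (hab : a ≤ b) (hF : ∀ w ∈ s, AbsolutelyContinuousOnInterval (F w) a b)
    (hFa : ∀ w ∈ s, F w a = 0) (hconc : ∀ t ∈ Icc a b, ConcaveOn ℝ s fun w => F w t)
    (hG : Antitone G) (hG0 : ∀ t ∈ Ioo a b, 0 ≤ G t) :
    ConcaveOn ℝ s fun w => ∫ t in a..b, deriv (F w) t * G t := by
  have hs : Convex ℝ s := (hconc a (left_mem_Icc.2 hab)).1
  refine ⟨hs, fun x hx y hy p q hp hq hpq => ?_⟩
  simp only [smul_eq_mul]
  set u := p * x + q * y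
  have hu : u ∈ s := hs hx hy hp hq hpq
  have hac : ∀ w ∈ s, ∀ r ∈ Icc a b, AbsolutelyContinuousOnInterval (F w) a r :=
    fun w hw r hr => (hF w hw).mono (uIcc_subset_uIcc_left (mem_uIcc_of_le hr.1 hr.2))
  have hd : ∀ w ∈ s, ∀ r ∈ Icc a b, IntervalIntegrable (deriv (F w)) volume a r :=
    fun w hw r hr => (hac w hw r hr).intervalIntegrable_deriv
  have hftc : ∀ w ∈ s, ∀ r ∈ Icc a b, ∫ t in a..r, deriv (F w) t = F w r := fun w hw r hr => by
    rw [(hac w hw r hr).integral_deriv_eq_sub, hFa w hw, sub_zero]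
  set k : ℝ → ℝ := fun t => deriv (F u) t - p * deriv (F x) t - q * deriv (F y) t
  have hprimitive : ∀ r ∈ Icc a b, 0 ≤ ∫ t in a..r, k t := by
    intro r hr
    rw [intervalIntegral.integral_sub_mul_sub_mul p q (hd u hu r hr) (hd x hx r hr)
      (hd y hy r hr), hftc u hu r hr, hftc x hx r hr, hftc y hy r hr]
    have := (hconc r hr).2 hx hy hp hq hpq
    simp only [smul_eq_mul] at this
    linarith
  have hb : b ∈ Icc a b := right_mem_Icc.2 hab
  have hk : IntervalIntegrable k volume a b :=
    ((hd u hu b hb).sub ((hd x hx b hb).const_mul p)).sub ((hd y hy b hb).const_mul q)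
  have hkG := integral_mul_nonneg_of_antitone hab hk hG hG0 hprimitive
  simp only [k, sub_mul, mul_assoc] at hkG
  rw [intervalIntegral.integral_sub_mul_sub_mul p q ((hd u hu b hb).mul_antitone hG)
    ((hd x hx b hb).mul_antitone hG) ((hd y hy b hb).mul_antitone hG)] at hkG
  linarith

theorem stochIncr_markovProduct (C₁ C₂ : ℝ → ℝ → ℝ) (h₁ : IsCopula C₁) (h₂ : IsCopula C₂)
    (hSI₁ : StochIncr C₁) (hSI₂ : StochIncr C₂) : StochIncr (MarkovProduct C₁ C₂) := by
  intro v hv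
  obtain ⟨G, hG, hG0, hGae⟩ := (hSI₂ v hv).exists_antitone_ae_eq_deriv (h₂.monotoneOn_left hv)
    (h₂.lipschitzOnWith_left hv)
  have hM : (fun w => MarkovProduct C₁ C₂ w v) =
      fun w => ∫ t in (0:ℝ)..1, deriv (C₁ w) t * G t := by
    funext w
    refine intervalIntegral.integral_congr_ae_restrict ?_
    rw [uIoc_of_le zero_le_one, ← Measure.restrict_congr_set Ioo_ae_eq_Ioc]
    filter_upwards [hGae] with t ht
    rw [ht]
  rw [hM]
  refine concaveOn_integral_deriv_mul_of_antitone zero_le_one (fun w hw => ?_)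
    (fun w hw => (h₁.1 w hw).1) hSI₁ hG fun t _ => hG0 t
  exact LipschitzOnWith.absolutelyContinuousOnInterval
    (uIcc_of_le (zero_le_one' ℝ) ▸ h₁.lipschitzOnWith_right hw)
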